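/- arXiv:0903.3580 — 2 statements merged into one kernel-verified Lean document; each statement's English description precedes it below -/
import Mathlib

section
/- For ξ ∈ [0, π), the 2×2 matrix P_ξ = [[cos²ξ, sinξ cosξ],[sinξ cosξ, sin²ξ]] is ℓ∞-contractive (i.e., each row sum of absolute values is at most 1) if and only if ξ ∈ {0, π/4, π/2, 3π/4}. -/
/-!
Because `sin² ξ + cos² ξ = 1`, the two row sums are at most `1` exactly when
`|sin ξ cos ξ|` is bounded by both `sin² ξ` and `cos² ξ`, that is, when
`sin ξ cos ξ (cos² ξ - sin² ξ) = sin (4ξ) / 4` vanishes; on `[0, π)` the zeros of `sin (4ξ)`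
are the multiples of `π / 4`.
-/

open scoped BigOperators

open Real

theorem mul_le_sq_and_mul_le_sq_iff {α : Type*} [CommRing α] [LinearOrder α]
    [IsStrictOrderedRing α] {x y : α} (hx : 0 ≤ x) (hy : 0 ≤ y) :
    x * y ≤ x ^ 2 ∧ x * y ≤ y ^ 2 ↔ x * y * (y - x) = 0 := by
  constructor
  · rintro ⟨hxy, hyx⟩
    nlinarith [mul_le_mul_of_nonneg_right hxy hy, mul_le_mul_of_nonneg_right hyx hx]
  · intro h
    rcases mul_eq_zero.1 h with h | h
    · rcases mul_eq_zero.1 h with rfl | rfl <;> simp [sq_nonneg]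
    · rw [sub_eq_zero.1 h]
      constructor <;> rw [sq]

theorem abs_mul_le_sq_and_le_sq_iff {α : Type*} [CommRing α] [LinearOrder α]
    [IsStrictOrderedRing α] (a b : α) :
    |a * b| ≤ a ^ 2 ∧ |a * b| ≤ b ^ 2 ↔ a * b * (b ^ 2 - a ^ 2) = 0 := by
  rw [abs_mul, ← sq_abs a, ← sq_abs b, mul_le_sq_and_mul_le_sq_iff (abs_nonneg a) (abs_nonneg b)]
  simp [sq_eq_sq_iff_abs_eq_abs, sub_eq_zero]

theorem rowSums_le_one_iff_of_sq_add_sq {a b : ℝ} (h : a ^ 2 + b ^ 2 = 1) :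
    (∀ i, ∑ j, |(!![b ^ 2, a * b; a * b, a ^ 2] : Matrix (Fin 2) (Fin 2) ℝ) i j| ≤ 1) ↔
      a * b * (b ^ 2 - a ^ 2) = 0 := by
  rw [← abs_mul_le_sq_and_le_sq_iff, Fin.forall_fin_two]
  simp only [Fin.sum_univ_two, Matrix.of_apply, Matrix.cons_val', Matrix.cons_val_zero,
    Matrix.cons_val_one, Matrix.empty_val', Matrix.cons_val_fin_one, abs_sq]
  constructor <;> rintro ⟨h0, h1⟩ <;> constructor <;> linarith

theorem Real.sin_four_mul (x : ℝ) :
    sin (4 * x) = 4 * (sin x * cos x * (cos x ^ 2 - sin x ^ 2)) := by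
  rw [show 4 * x = 2 * (2 * x) by ring, sin_two_mul, sin_two_mul, cos_two_mul, cos_sq']
  ring

theorem Real.sin_four_mul_eq_zero_iff_of_mem_Ico {x : ℝ} (hx : x ∈ Set.Ico 0 π) :
    sin (4 * x) = 0 ↔ x ∈ ({0, π / 4, π / 2, 3 * π / 4} : Set ℝ) := by
  simp only [sin_eq_zero_iff, Set.mem_insert_iff, Set.mem_singleton_iff]
  constructor
  · rintro ⟨n, hn⟩
    have hn0 : 0 ≤ n := by exact_mod_cast (show (0 : ℝ) ≤ n by nlinarith [hx.1, pi_pos])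
    have hn4 : n < 4 := by exact_mod_cast (show (n : ℝ) < 4 by nlinarith [hx.2, pi_pos])
    interval_cases n
    all_goals push_cast at hn
    exacts [Or.inl (by linarith), Or.inr (Or.inl (by linarith)),
      Or.inr (Or.inr (Or.inl (by linarith))), Or.inr (Or.inr (Or.inr (by linarith)))]
  · rintro (rfl | rfl | rfl | rfl)
    exacts [⟨0, by push_cast; ring⟩, ⟨1, by push_cast; ring⟩, ⟨2, by push_cast; ring⟩,
      ⟨3, by push_cast; ring⟩]

/-- For `ξ ∈ [0,π)`, the matrix `P_ξ = [[cos²ξ, sinξ cosξ],[sinξ cosξ, sin²ξ]]` is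
`ℓ∞`-contractive (each row sum of absolute values is at most 1) if and only if
`ξ ∈ {0, π/4, π/2, 3π/4}`. -/
theorem proj_matrix_two_dim_linf_contractive_iff
    (ξ : ℝ) (hξ : ξ ∈ Set.Ico 0 Real.pi) :
    (∀ i, ∑ j, |(!![(Real.cos ξ)^2, Real.sin ξ * Real.cos ξ;
                    Real.sin ξ * Real.cos ξ, (Real.sin ξ)^2] : Matrix (Fin 2) (Fin 2) ℝ) i j| ≤ 1)
      ↔ ξ ∈ ({0, Real.pi / 4, Real.pi / 2, 3 * Real.pi / 4} : Set ℝ) := by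
  rw [rowSums_le_one_iff_of_sq_add_sq (sin_sq_add_cos_sq ξ),
    ← sin_four_mul_eq_zero_iff_of_mem_Ico hξ, sin_four_mul, mul_eq_zero_iff_left four_ne_zero]
end

section
/- Let H be a Hilbert space, S a bounded accretive operator on H (i.e., Re(Sx|x) ≥ 0 for all x), and C a closed convex subset of H with metric projection P_C. If Re(S P_C x | x − P_C x) ≥ 0 for all x ∈ H, then the semigroup (e^{−tS})_{t≥0} leaves C invariant; conversely if (e^{−tS})_{t≥0} leaves C invariant then Re(S P_C x | x − P_C x) ≥ 0 for all x ∈ H. (Finite-dimensional / bounded-operator version of Ouhabaz's invariance criterion.) -/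
/-!
If `C` is invariant, then for every `x` the orbit `e^{-tS} P x` stays in `C`, so by the
variational inequality `⟪x - P x, e^{-tS} P x - P x⟫ ≤ 0` for `t ≥ 0`; differentiating at `t = 0`
gives `⟪x - P x, -S P x⟫ ≤ 0`. Conversely, since `P` is nonexpansive, `d(y)² = ‖y - P y‖²` is
differentiable with gradient `2 (y - P y)`, so along an orbit `u` its derivative is
`-2 (⟪u - P u, S (u - P u)⟫ + ⟪u - P u, S P u⟫) ≤ 0` by accretivity and the hypothesis; hence
`d(u t)²` decreases from `d(u 0)² = 0`, and `u t ∈ C`.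
-/

open scoped InnerProductSpace
open NormedSpace Set Filter Topology

namespace NearestPoint

variable {F : Type*} [NormedAddCommGroup F] {C : Set F} {P : F → F}

theorem eq_of_mem (hP_nearest : ∀ x, ∀ y ∈ C, ‖x - P x‖ ≤ ‖x - y‖) {x : F} (hx : x ∈ C) :
    P x = x := by
  have h := hP_nearest x x hx
  rw [sub_self, norm_zero] at h
  exact (sub_eq_zero.1 (norm_le_zero_iff.1 h)).symm

variable [InnerProductSpace ℝ F]

theorem real_inner_sub_le_zero (hC : Convex ℝ C) (hP_mem : ∀ x, P x ∈ C)
    (hP_nearest : ∀ x, ∀ y ∈ C, ‖x - P x‖ ≤ ‖x - y‖) (x : F) {y : F} (hy : y ∈ C) :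
    ⟪x - P x, y - P x⟫_ℝ ≤ 0 := by
  have : Nonempty C := ⟨⟨P x, hP_mem x⟩⟩
  have hbdd : BddBelow (range fun w : C => ‖x - (w : F)‖) :=
    ⟨0, by rintro r ⟨w, rfl⟩; exact norm_nonneg _⟩
  refine (norm_eq_iInf_iff_real_inner_le_zero hC (hP_mem x)).1 ?_ y hy
  exact le_antisymm (le_ciInf fun w => hP_nearest x w w.2) (ciInf_le hbdd ⟨P x, hP_mem x⟩)

theorem norm_sub_le (hC : Convex ℝ C) (hP_mem : ∀ x, P x ∈ C)
    (hP_nearest : ∀ x, ∀ y ∈ C, ‖x - P x‖ ≤ ‖x - y‖) (x y : F) :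
    ‖P x - P y‖ ≤ ‖x - y‖ := by
  have hx := real_inner_sub_le_zero hC hP_mem hP_nearest x (hP_mem y)
  have hy := real_inner_sub_le_zero hC hP_mem hP_nearest y (hP_mem x)
  have hsq : ‖P x - P y‖ ^ 2 ≤ ⟪x - y, P x - P y⟫_ℝ := by
    have hsplit : ⟪x - y, P x - P y⟫_ℝ - ‖P x - P y‖ ^ 2
        = -⟪x - P x, P y - P x⟫_ℝ - ⟪y - P y, P x - P y⟫_ℝ := by
      rw [← real_inner_self_eq_norm_sq]
      simp only [inner_sub_left, inner_sub_right, real_inner_comm]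
      ring
    linarith
  have hcs := real_inner_le_norm (x - y) (P x - P y)
  nlinarith [norm_nonneg (P x - P y), norm_nonneg (x - y)]

theorem abs_norm_sub_sq_add_sub_le (hC : Convex ℝ C) (hP_mem : ∀ x, P x ∈ C)
    (hP_nearest : ∀ x, ∀ y ∈ C, ‖x - P x‖ ≤ ‖x - y‖) (x h : F) :
    |‖x + h - P (x + h)‖ ^ 2 - ‖x - P x‖ ^ 2 - 2 * ⟪x - P x, h⟫_ℝ| ≤ ‖h‖ ^ 2 := by
  set q := P x
  set r := P (x + h)
  have hupper : ‖x + h - r‖ ^ 2 ≤ ‖x - q‖ ^ 2 + 2 * ⟪x - q, h⟫_ℝ + ‖h‖ ^ 2 := by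
    rw [← norm_add_sq_real, sub_add_eq_add_sub]
    exact pow_le_pow_left₀ (norm_nonneg _) (hP_nearest (x + h) q (hP_mem x)) 2
  have hlower : ‖x - q‖ ^ 2 ≤ ‖x + h - r‖ ^ 2 - 2 * ⟪x + h - r, h⟫_ℝ + ‖h‖ ^ 2 := by
    rw [← norm_sub_sq_real, add_sub_right_comm, add_sub_cancel_right]
    exact pow_le_pow_left₀ (norm_nonneg _) (hP_nearest x r (hP_mem (x + h))) 2
  have hcross : ⟪x + h - r, h⟫_ℝ - ⟪x - q, h⟫_ℝ = ‖h‖ ^ 2 + ⟪q - r, h⟫_ℝ := by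
    rw [← real_inner_self_eq_norm_sq, ← inner_sub_left, ← inner_add_left]
    congr 1
    abel
  have hqr : |⟪q - r, h⟫_ℝ| ≤ ‖h‖ ^ 2 := by
    have hlip : ‖q - r‖ ≤ ‖h‖ := by
      simpa using norm_sub_le hC hP_mem hP_nearest x (x + h)
    calc |⟪q - r, h⟫_ℝ| ≤ ‖q - r‖ * ‖h‖ := abs_real_inner_le_norm _ _
      _ ≤ ‖h‖ ^ 2 := by nlinarith [norm_nonneg h, norm_nonneg (q - r)]
  rw [abs_le] at hqr ⊢
  constructor <;> linarith [hqr.1, hqr.2]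

theorem hasFDerivAt_norm_sub_sq (hC : Convex ℝ C) (hP_mem : ∀ x, P x ∈ C)
    (hP_nearest : ∀ x, ∀ y ∈ C, ‖x - P x‖ ≤ ‖x - y‖) (x : F) :
    HasFDerivAt (fun y => ‖y - P y‖ ^ 2) ((2 : ℝ) • innerSL ℝ (x - P x)) x := by
  rw [hasFDerivAt_iff_isLittleO_nhds_zero]
  refine Asymptotics.IsBigO.trans_isLittleO ?_ (Asymptotics.isLittleO_norm_pow_id one_lt_two)
  refine Asymptotics.IsBigO.of_bound' (Eventually.of_forall fun h => ?_)
  simpa [inner_sub_left] using abs_norm_sub_sq_add_sub_le hC hP_mem hP_nearest x h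

theorem _root_.HasDerivAt.norm_sub_nearestPoint_sq (hC : Convex ℝ C) (hP_mem : ∀ x, P x ∈ C)
    (hP_nearest : ∀ x, ∀ y ∈ C, ‖x - P x‖ ≤ ‖x - y‖) {u : ℝ → F} {u' : F} {t : ℝ}
    (hu : HasDerivAt u u' t) :
    HasDerivAt (fun s => ‖u s - P (u s)‖ ^ 2) (2 * ⟪u t - P (u t), u'⟫_ℝ) t :=
  ((hasFDerivAt_norm_sub_sq hC hP_mem hP_nearest (u t)).comp_hasDerivAt t hu).congr_deriv
    (by simp [inner_sub_left])

end NearestPoint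

theorem HasDerivAt.nonpos_of_isMaxOn_Ici {f : ℝ → ℝ} {f' a : ℝ} (hf : HasDerivAt f f' a)
    (hmax : IsMaxOn f (Ici a) a) : f' ≤ 0 := by
  have hcone : (1 : ℝ) ∈ posTangentConeAt (Ici a) a :=
    mem_posTangentConeAt_of_segment_subset fun z hz => (segment_subset_Icc (by simp) hz).1
  simpa using hmax.localize.hasFDerivWithinAt_nonpos hf.hasFDerivAt.hasFDerivWithinAt hcone

theorem hasDerivAt_exp_neg_smul_apply {E : Type*} [NormedAddCommGroup E] [NormedSpace ℂ E]
    [CompleteSpace E] (S : E →L[ℂ] E) (x : E) (t : ℝ) :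
    HasDerivAt (fun s : ℝ => exp ((-s) • S) x) (-S (exp ((-t) • S) x)) t := by
  have h := hasDerivAt_exp_smul_const' (𝕂 := ℝ) (-S) t
  simp only [smul_neg, ← neg_smul] at h
  simpa [Function.comp_def] using
    ((ContinuousLinearMap.apply ℂ E x).restrictScalars ℝ).hasFDerivAt.comp_hasDerivAt t h

section Ouhabaz

variable {H : Type*} [NormedAddCommGroup H] [InnerProductSpace ℂ H] [CompleteSpace H]
  (S : H →L[ℂ] H) {C : Set H} {P : H → H}

theorem re_inner_apply_nearestPoint_nonneg_of_invariant (hC : Convex ℝ C)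
    (hP_mem : ∀ x, P x ∈ C) (hP_nearest : ∀ x, ∀ y ∈ C, ‖x - P x‖ ≤ ‖x - y‖)
    (hinv : ∀ t : ℝ, 0 ≤ t → ∀ x ∈ C, exp ((-t) • S) x ∈ C) (x : H) :
    0 ≤ (⟪S (P x), x - P x⟫_ℂ).re := by
  let : InnerProductSpace ℝ H := .complexToReal
  have hderiv : HasDerivAt (fun s : ℝ => ⟪x - P x, exp ((-s) • S) (P x)⟫_ℝ)
      ⟪x - P x, -S (P x)⟫_ℝ 0 := by
    simpa using (hasDerivAt_const (0 : ℝ) (x - P x)).inner ℝ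
      (hasDerivAt_exp_neg_smul_apply S (P x) 0)
  have hmax : IsMaxOn (fun s : ℝ => ⟪x - P x, exp ((-s) • S) (P x)⟫_ℝ) (Ici 0) 0 := by
    intro s hs
    have := NearestPoint.real_inner_sub_le_zero hC hP_mem hP_nearest x
      (hinv s hs (P x) (hP_mem x))
    show _ ≤ (_ : ℝ)
    simp only [neg_zero, zero_smul, exp_zero, one_apply_eq_self]
    rw [inner_sub_right] at this
    linarith
  have hnonpos := hderiv.nonpos_of_isMaxOn_Ici hmax
  rw [inner_neg_right, neg_nonpos, real_inner_comm] at hnonpos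
  exact hnonpos

theorem exp_neg_smul_apply_mem_of_re_inner_apply_nearestPoint_nonneg
    (haccr : ∀ x : H, 0 ≤ (⟪S x, x⟫_ℂ).re) (hC : Convex ℝ C)
    (hP_mem : ∀ x, P x ∈ C) (hP_nearest : ∀ x, ∀ y ∈ C, ‖x - P x‖ ≤ ‖x - y‖)
    (hS : ∀ x : H, 0 ≤ (⟪S (P x), x - P x⟫_ℂ).re) {t : ℝ} (ht : 0 ≤ t) {x : H} (hx : x ∈ C) :
    exp ((-t) • S) x ∈ C := by
  let : InnerProductSpace ℝ H := .complexToReal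
  set u : ℝ → H := fun s => exp ((-s) • S) x
  have hderiv (s : ℝ) : HasDerivAt (fun s => ‖u s - P (u s)‖ ^ 2)
      (2 * ⟪u s - P (u s), -S (u s)⟫_ℝ) s :=
    (hasDerivAt_exp_neg_smul_apply S x s).norm_sub_nearestPoint_sq hC hP_mem hP_nearest
  have hnonpos (s : ℝ) : 2 * ⟪u s - P (u s), -S (u s)⟫_ℝ ≤ 0 := by
    have haccr' : 0 ≤ ⟪u s - P (u s), S (u s - P (u s))⟫_ℝ := by
      rw [real_inner_comm]; exact haccr _
    have hS' : 0 ≤ ⟪u s - P (u s), S (P (u s))⟫_ℝ := by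
      rw [real_inner_comm]; exact hS _
    rw [map_sub, inner_sub_right] at haccr'
    rw [inner_neg_right]
    linarith
  have hdist : ‖u t - P (u t)‖ ^ 2 ≤ 0 := by
    simpa [u, NearestPoint.eq_of_mem hP_nearest hx] using
      antitone_of_hasDerivAt_nonpos hderiv hnonpos ht
  have hfix : u t = P (u t) := by simpa [sub_eq_zero] using hdist
  show u t ∈ C
  exact hfix ▸ hP_mem _

end Ouhabaz

theorem ouhabaz_invariance_criterion_bounded_general
    {H : Type*} [NormedAddCommGroup H] [InnerProductSpace ℂ H] [CompleteSpace H]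
    (S : H →L[ℂ] H)
    (haccr : ∀ x : H, 0 ≤ (inner ℂ (S x) x : ℂ).re)
    (C : Set H) (hC_convex : Convex ℝ C)
    (P : H → H)
    (hP_mem : ∀ x, P x ∈ C)
    (hP_nearest : ∀ x, ∀ y ∈ C, ‖x - P x‖ ≤ ‖x - y‖) :
    (∀ t : ℝ, 0 ≤ t → ∀ x ∈ C, (NormedSpace.exp ((-t) • S)) x ∈ C)
      ↔ ∀ x : H, 0 ≤ (inner ℂ (S (P x)) (x - P x) : ℂ).re :=
  ⟨re_inner_apply_nearestPoint_nonneg_of_invariant S hC_convex hP_mem hP_nearest,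
    fun hS _ ht _ hx =>
      exp_neg_smul_apply_mem_of_re_inner_apply_nearestPoint_nonneg S haccr hC_convex hP_mem
        hP_nearest hS ht hx⟩

/-- Ouhabaz's invariance criterion (bounded-operator version): for a bounded accretive
operator `S` on a Hilbert space and a nonempty closed convex set `C` with nearest-point
projection `P`, the semigroup `(e^{-tS})_{t≥0}` leaves `C` invariant if and only if
`Re (S(Px) | x - Px) ≥ 0` for all `x`. -/
theorem ouhabaz_invariance_criterion_bounded
    {H : Type*} [NormedAddCommGroup H] [InnerProductSpace ℂ H] [CompleteSpace H]
    (S : H →L[ℂ] H)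
    (haccr : ∀ x : H, 0 ≤ (inner ℂ (S x) x : ℂ).re)
    (C : Set H) (hC_ne : C.Nonempty) (hC_closed : IsClosed C) (hC_convex : Convex ℝ C)
    (P : H → H)
    (hP_mem : ∀ x, P x ∈ C)
    (hP_nearest : ∀ x, ∀ y ∈ C, ‖x - P x‖ ≤ ‖x - y‖) :
    (∀ t : ℝ, 0 ≤ t → ∀ x ∈ C, (NormedSpace.exp ((-t) • S)) x ∈ C)
      ↔ ∀ x : H, 0 ≤ (inner ℂ (S (P x)) (x - P x) : ℂ).re :=
  ouhabaz_invariance_criterion_bounded_general S haccr C hC_convex P hP_mem hP_nearest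
end
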